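/- The map that sends a k-linear map γ : Ω_1 → S (where Ω_1 is the k-span of x_2, …, x_q and S is the k-span of x_1², …, x_1^{n−1} in A_{q,n}) to the ideal of A_{q,n} generated by the elements x_2 − γ(x_2), …, x_q − γ(x_q) is injective, and its image is exactly the orbit {σ(q_1) : σ ∈ I_{q,n}} of the ideal q_1 under the group of linearly trivial automorphisms. In particular, Hom_k(Ω_1, S) is in natural bijection with the coset space I_{q,n}/(I_{q,n} ∩ G_1). -/

import Mathlib

set_option synthInstance.maxHeartbeats 400000

noncomputable section

/-- The ring of `n`-nil polynomials `A_{q,n} = k[x_1,…,x_q]/m_0^n`. -/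
abbrev Aqn (k : Type) [Field k] (q n : ℕ) : Type :=
  MvPolynomial (Fin q) k ⧸
    (Ideal.span (Set.range (MvPolynomial.X : Fin q → MvPolynomial (Fin q) k))) ^ n

/-- The image of the variable `x_i` in `A_{q,n}`. -/
def xA (k : Type) [Field k] (q n : ℕ) (i : Fin q) : Aqn k q n :=
  Ideal.Quotient.mk _ (MvPolynomial.X i)

/-- The maximal ideal `m` of `A_{q,n}` generated by `x_1, …, x_q`. -/
def mA (k : Type) [Field k] (q n : ℕ) : Ideal (Aqn k q n) :=
  Ideal.span (Set.range (xA k q n))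

/-- The ideal `q_1` of `A_{q,n}` generated by `x_2, …, x_q`. -/
def q1A (k : Type) [Field k] (q n : ℕ) [NeZero q] : Ideal (Aqn k q n) :=
  Ideal.span {y | ∃ i : Fin q, i ≠ 0 ∧ y = xA k q n i}

/-- The `k`-linear span `Ω_1` of `x_2, …, x_q` in `A_{q,n}`. -/
def Omega1A (k : Type) [Field k] (q n : ℕ) [NeZero q] : Submodule k (Aqn k q n) :=
  Submodule.span k {y | ∃ i : Fin q, i ≠ 0 ∧ y = xA k q n i}

/-- The `k`-linear span `S` of `x_1², …, x_1^(n-1)` in `A_{q,n}`. -/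
def SA (k : Type) [Field k] (q n : ℕ) [NeZero q] : Submodule k (Aqn k q n) :=
  Submodule.span k {y | ∃ j : ℕ, 2 ≤ j ∧ j ≤ n - 1 ∧ y = xA k q n 0 ^ j}

/-- The map sending a `k`-linear map `γ : Ω_1 → S` to the ideal of `A_{q,n}` generated by
the elements `x_i - γ(x_i)`, `i = 2, …, q`. -/
def idealOfGamma (k : Type) [Field k] (q n : ℕ) [NeZero q]
    (γ : Omega1A k q n →ₗ[k] SA k q n) : Ideal (Aqn k q n) :=
  Ideal.span {y | ∃ i : {i : Fin q // i ≠ 0},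
    y = xA k q n i.1 - (γ ⟨xA k q n i.1, Submodule.subset_span ⟨i.1, i.2, rfl⟩⟩ : Aqn k q n)}

/-!
For injectivity, the retraction `x_1 ↦ x_1`, `x_i ↦ γ(x_i)` kills `I_γ` and fixes `S`, so
`S ∩ I_γ = 0`; if `I_γ = I_γ'` then `γ(x_i) - γ'(x_i) ∈ S ∩ I_γ`.

The shear `σ_γ : x_i ↦ x_i - γ(x_i)` (fixing `x_1`) is a linearly trivial automorphism with
`σ_γ(q_1) = I_γ`. Conversely, if `σ` is linearly trivial then
`m = (x_1) + q_1 ⊆ (x_1) + σ(q_1) + m²`; iterating this down the filtration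
`m ⊇ m² ⊇ ⋯ ⊇ mⁿ = 0` gives `m² ⊆ S + σ(q_1)`, so each `x_i` (`i ≥ 2`) is congruent modulo
`σ(q_1)` to some `s_i ∈ S`. Taking `γ(x_i) = s_i` on the basis `x_2, …, x_q` of `Ω_1` gives
`σ_γ(q_1) = I_γ ⊆ σ(q_1)`, and an inclusion between two images of one ideal under automorphisms
of a Noetherian ring is an equality, by the ascending chain condition.
-/

theorem OrderIso.apply_eq_of_apply_le {α : Type*} [PartialOrder α] [WellFoundedGT α]
    (e : α ≃o α) {a : α} (h : e a ≤ a) : e a = a := by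
  by_contra hne
  have hlt : a < e.symm a := by simpa using e.symm.strictMono (h.lt_of_ne hne)
  refine not_strictMono_of_wellFoundedGT (fun j => e.symm^[j] a)
    (strictMono_nat_of_lt_succ fun j => ?_)
  rw [Function.iterate_succ_apply]
  exact e.symm.strictMono.iterate j hlt

theorem Ideal.map_eq_map_of_map_le_map {R F : Type*} [CommRing R] [IsNoetherianRing R]
    [EquivLike F R R] [RingEquivClass F R R] (e e' : F) {I : Ideal R}
    (h : I.map e ≤ I.map e') : I.map e = I.map e' := by
  let Φ : Ideal R ≃o Ideal R :=
    (Ideal.relIsoOfBijective e' (EquivLike.bijective e')).trans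
      (Ideal.relIsoOfBijective e (EquivLike.bijective e)).symm
  have hΦ : Φ (I.map e') = I.map e :=
    congrArg (Ideal.map e) (Ideal.comap_map_of_bijective e' (EquivLike.bijective e'))
  rw [← hΦ] at h ⊢
  exact Φ.apply_eq_of_apply_le h

theorem Ideal.pow_le_pow_sup_sup_pow_succ {R : Type*} [CommSemiring R] {I J M : Ideal R}
    (hIM : I ≤ M) (hM : M ≤ I ⊔ J ⊔ M ^ 2) (j : ℕ) : M ^ j ≤ I ^ j ⊔ J ⊔ M ^ (j + 1) := by
  induction j with
  | zero => simp
  | succ j ih =>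
    have hIM' : I ^ j * M ≤ I ^ (j + 1) ⊔ J ⊔ M ^ (j + 1 + 1) := by
      calc I ^ j * M ≤ I ^ j * (I ⊔ J ⊔ M ^ 2) := Ideal.mul_mono_right hM
        _ = I ^ (j + 1) ⊔ I ^ j * J ⊔ I ^ j * M ^ 2 := by rw [mul_sup, mul_sup, ← pow_succ]
        _ ≤ I ^ (j + 1) ⊔ J ⊔ M ^ (j + 1 + 1) := by
          gcongr
          · exact Ideal.mul_le_right
          · rw [add_assoc, pow_add]
            exact Ideal.mul_mono_left (Ideal.pow_right_mono hIM j)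
    calc M ^ (j + 1) = M ^ j * M := pow_succ M j
      _ ≤ (I ^ j ⊔ J ⊔ M ^ (j + 1)) * M := Ideal.mul_mono_left ih
      _ = I ^ j * M ⊔ J * M ⊔ M ^ (j + 1 + 1) := by rw [sup_mul, sup_mul, ← pow_succ]
      _ ≤ I ^ (j + 1) ⊔ J ⊔ M ^ (j + 1 + 1) :=
        sup_le (sup_le hIM' (Ideal.mul_le_left.trans (le_sup_right.trans le_sup_left)))
          le_sup_right

section Filtration

variable {k A : Type*} [CommRing k] [CommRing A] [Algebra k A] {M J : Ideal A} {x : A}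

theorem Ideal.restrictScalars_span_singleton_pow_le
    (hA : ∀ a : A, ∃ c : k, a - algebraMap k A c ∈ M) (hx : x ∈ M) (j : ℕ) :
    (Ideal.span {x ^ j}).restrictScalars k ≤ k ∙ x ^ j ⊔ (M ^ (j + 1)).restrictScalars k := by
  intro y hy
  obtain ⟨a, rfl⟩ := Ideal.mem_span_singleton'.mp hy
  obtain ⟨c, hc⟩ := hA a
  refine Submodule.mem_sup.mpr ⟨c • x ^ j,
    Submodule.smul_mem _ c (Submodule.mem_span_singleton_self _),
    (a - algebraMap k A c) * x ^ j, ?_, by rw [Algebra.smul_def]; ring⟩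
  rw [pow_succ']
  exact Ideal.mul_mem_mul hc (Ideal.pow_mem_pow hx j)

theorem Ideal.restrictScalars_pow_le_span_pow_sup
    (hA : ∀ a : A, ∃ c : k, a - algebraMap k A c ∈ M) (hx : x ∈ M)
    (hM : M ≤ Ideal.span {x} ⊔ J ⊔ M ^ 2) {N : ℕ} (hN : M ^ N = ⊥) (j : ℕ) :
    (M ^ j).restrictScalars k ≤
      Submodule.span k {y | ∃ l, j ≤ l ∧ y = x ^ l} ⊔ J.restrictScalars k := by
  set T : ℕ → Submodule k A := fun i => Submodule.span k {y | ∃ l, i ≤ l ∧ y = x ^ l}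
  have hT : ∀ {i l}, i ≤ l → k ∙ x ^ l ≤ T i := fun hil =>
    (Submodule.span_singleton_le_iff_mem _ _).mpr (Submodule.subset_span ⟨_, hil, rfl⟩)
  have step : ∀ i, (M ^ i).restrictScalars k ≤
      k ∙ x ^ i ⊔ J.restrictScalars k ⊔ (M ^ (i + 1)).restrictScalars k := fun i => by
    have hi := Ideal.pow_le_pow_sup_sup_pow_succ ((Ideal.span_singleton_le_iff_mem _).mpr hx) hM i
    rw [Ideal.span_singleton_pow] at hi
    refine (Submodule.restrictScalars_mono k hi).trans ?_
    simp only [Submodule.restrictScalars_sup]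
    have hxi := Ideal.restrictScalars_span_singleton_pow_le hA hx i
    exact sup_le (sup_le (hxi.trans (sup_le (le_sup_left.trans le_sup_left) le_sup_right))
      (le_sup_right.trans le_sup_left)) le_sup_right
  have hd : ∀ d i, (M ^ i).restrictScalars k ≤
      T i ⊔ J.restrictScalars k ⊔ (M ^ (i + d)).restrictScalars k := by
    intro d
    induction d with
    | zero => intro i; exact le_sup_right
    | succ d ih =>
      intro i
      refine (ih i).trans (sup_le le_sup_left ((step (i + d)).trans ?_))
      rw [← add_assoc]
      exact sup_le_sup_right (sup_le_sup_right (hT (Nat.le_add_right i d)) _) _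
  have hjN : M ^ (j + N) = ⊥ := le_bot_iff.mp (hN ▸ Ideal.pow_le_pow_right (Nat.le_add_left N j))
  simpa [hjN] using hd N j

end Filtration

namespace Aqn

open MvPolynomial

variable {k : Type} [Field k] {q n : ℕ}

theorem mA_eq_map :
    mA k q n = (idealOfVars (Fin q) k).map (Ideal.Quotient.mk (idealOfVars (Fin q) k ^ n)) := by
  rw [mA, Ideal.map_span, ← Set.range_comp]
  rfl

theorem mA_pow_eq_bot : mA k q n ^ n = ⊥ := by
  rw [mA_eq_map, ← Ideal.map_pow, Ideal.map_quotient_self]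

theorem xA_mem_mA (i : Fin q) : xA k q n i ∈ mA k q n :=
  Ideal.subset_span (Set.mem_range_self i)

theorem xA_pow_eq_zero (i : Fin q) {l : ℕ} (hl : n ≤ l) : xA k q n i ^ l = 0 := by
  rw [← Ideal.mem_bot, ← mA_pow_eq_bot]
  exact Ideal.pow_le_pow_right hl (Ideal.pow_mem_pow (xA_mem_mA i) l)

theorem exists_sub_algebraMap_mem_mA (a : Aqn k q n) :
    ∃ c : k, a - algebraMap k (Aqn k q n) c ∈ mA k q n := by
  obtain ⟨p, rfl⟩ := Ideal.Quotient.mk_surjective a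
  refine ⟨constantCoeff p, ?_⟩
  rw [mA_eq_map]
  refine Ideal.mem_map_of_mem _ (x := p - C (constantCoeff p)) ?_
  rw [← pow_one (idealOfVars (Fin q) k), mem_pow_idealOfVars_iff']
  intro x hx
  obtain rfl : x = 0 := (Finsupp.degree_eq_zero_iff x).mp (by omega)
  simp [constantCoeff_eq]

theorem linearIndependent_xA (hn : 2 ≤ n) : LinearIndependent k (xA k q n) := by
  classical
  rw [Fintype.linearIndependent_iff]
  intro g hg j
  have hmem : ∑ i, g i • X i ∈ idealOfVars (Fin q) k ^ 2 := by
    refine Ideal.pow_le_pow_right hn (Ideal.Quotient.eq_zero_iff_mem.mp ?_)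
    rw [← Ideal.Quotient.mkₐ_eq_mk k, map_sum]
    simpa [xA] using hg
  have := (mem_pow_idealOfVars_iff' 2 _).mp hmem (Finsupp.single j 1) (by simp)
  simpa [coeff_sum, coeff_X, Finsupp.single_left_inj] using this

def lift (g : Fin q → Aqn k q n) (hg : ∀ i, g i ∈ mA k q n) : Aqn k q n →ₐ[k] Aqn k q n :=
  Ideal.Quotient.liftₐ _ (aeval g) fun p hp => by
    have hle : (idealOfVars (Fin q) k ^ n).map (aeval g) ≤ mA k q n ^ n := by
      rw [Ideal.map_pow]
      refine Ideal.pow_right_mono ?_ n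
      rw [Ideal.map_span, Ideal.span_le]
      rintro _ ⟨_, ⟨i, rfl⟩, rfl⟩
      simpa using hg i
    simpa [mA_pow_eq_bot] using hle (Ideal.mem_map_of_mem _ hp)

@[simp]
theorem lift_xA (g : Fin q → Aqn k q n) (hg : ∀ i, g i ∈ mA k q n) (i : Fin q) :
    lift g hg (xA k q n i) = g i := by
  rw [lift, xA, Ideal.Quotient.liftₐ_apply]
  exact aeval_X g i

theorem algHom_ext {f g : Aqn k q n →ₐ[k] Aqn k q n} (h : ∀ i, f (xA k q n i) = g (xA k q n i)) :
    f = g :=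
  Ideal.Quotient.algHom_ext k (MvPolynomial.algHom_ext h)

/-- Membership in the group `I_{q,n}` of linearly trivial automorphisms. -/
def IsLinearlyTrivial (σ : Aqn k q n ≃ₐ[k] Aqn k q n) : Prop :=
  ∀ i, σ (xA k q n i) - xA k q n i ∈ mA k q n ^ 2

variable [NeZero q]

theorem mA_eq_span_sup_q1A : mA k q n = Ideal.span {xA k q n 0} ⊔ q1A k q n := by
  refine le_antisymm (Ideal.span_le.mpr ?_) (sup_le ?_ ?_)
  · rintro _ ⟨i, rfl⟩
    by_cases hi : i = 0
    · exact Ideal.mem_sup_left (hi ▸ Ideal.mem_span_singleton_self _)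
    · exact Ideal.mem_sup_right (Ideal.subset_span ⟨i, hi, rfl⟩)
  · exact (Ideal.span_singleton_le_iff_mem _).mpr (xA_mem_mA 0)
  · exact Ideal.span_le.mpr fun _ ⟨i, _, hy⟩ => hy ▸ xA_mem_mA i

theorem mem_mA_sq_of_mem_SA {s : Aqn k q n} (hs : s ∈ SA k q n) : s ∈ mA k q n ^ 2 := by
  have hle : SA k q n ≤ (mA k q n ^ 2).restrictScalars k :=
    Submodule.span_le.mpr fun _ ⟨l, hl, _, hy⟩ =>
      hy ▸ Ideal.pow_le_pow_right hl (Ideal.pow_mem_pow (xA_mem_mA 0) l)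
  exact hle hs

theorem mem_mA_of_mem_SA {s : Aqn k q n} (hs : s ∈ SA k q n) : s ∈ mA k q n :=
  Ideal.pow_le_self two_ne_zero (mem_mA_sq_of_mem_SA hs)

theorem span_xA_zero_pow_le_SA :
    Submodule.span k {y | ∃ l, 2 ≤ l ∧ y = xA k q n 0 ^ l} ≤ SA k q n := by
  refine Submodule.span_le.mpr ?_
  rintro _ ⟨l, hl, rfl⟩
  by_cases hln : l ≤ n - 1
  · exact Submodule.subset_span ⟨l, hl, hln, rfl⟩
  · rw [SetLike.mem_coe, xA_pow_eq_zero 0 (by omega)]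
    exact zero_mem _

theorem apply_eq_self_of_mem_SA {φ : Aqn k q n →ₐ[k] Aqn k q n} (hφ : φ (xA k q n 0) = xA k q n 0)
    {s : Aqn k q n} (hs : s ∈ SA k q n) : φ s = s := by
  have hle : SA k q n ≤ Subalgebra.toSubmodule (AlgHom.equalizer φ (AlgHom.id k _)) :=
    Submodule.span_le.mpr fun _ ⟨l, _, _, hy⟩ =>
      hy ▸ pow_mem (show _ ∈ AlgHom.equalizer _ _ from hφ) l
  exact hle hs

/-- `γ(x_i)`, extended by `0` at `i = 0` (where `x_1 ∉ Ω_1`). -/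
def gammaVal (γ : Omega1A k q n →ₗ[k] SA k q n) (i : Fin q) : Aqn k q n :=
  if h : i = 0 then 0 else γ ⟨xA k q n i, Submodule.subset_span ⟨i, h, rfl⟩⟩

theorem gammaVal_mem_SA (γ : Omega1A k q n →ₗ[k] SA k q n) (i : Fin q) :
    gammaVal γ i ∈ SA k q n := by
  unfold gammaVal
  split
  · exact zero_mem _
  · exact Subtype.coe_prop _

theorem idealOfGamma_eq_span (γ : Omega1A k q n →ₗ[k] SA k q n) :
    idealOfGamma k q n γ = Ideal.span {y | ∃ i, i ≠ 0 ∧ y = xA k q n i - gammaVal γ i} := by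
  unfold idealOfGamma
  congr 1
  ext y
  constructor
  · rintro ⟨⟨i, hi⟩, rfl⟩
    exact ⟨i, hi, by rw [gammaVal, dif_neg hi]⟩
  · rintro ⟨i, hi, rfl⟩
    exact ⟨⟨i, hi⟩, by rw [gammaVal, dif_neg hi]⟩

theorem idealOfGamma_le {γ : Omega1A k q n →ₗ[k] SA k q n} {I : Ideal (Aqn k q n)}
    (h : ∀ i, i ≠ 0 → xA k q n i - gammaVal γ i ∈ I) : idealOfGamma k q n γ ≤ I := by
  rw [idealOfGamma_eq_span, Ideal.span_le]
  rintro _ ⟨i, hi, rfl⟩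
  exact h i hi

theorem sub_gammaVal_mem_idealOfGamma (γ : Omega1A k q n →ₗ[k] SA k q n) {i : Fin q} (hi : i ≠ 0) :
    xA k q n i - gammaVal γ i ∈ idealOfGamma k q n γ := by
  rw [idealOfGamma_eq_span]
  exact Ideal.subset_span ⟨i, hi, rfl⟩

def retraction (γ : Omega1A k q n →ₗ[k] SA k q n) : Aqn k q n →ₐ[k] Aqn k q n :=
  lift (fun i => if i = 0 then xA k q n 0 else gammaVal γ i) fun i => by
    split
    · exact xA_mem_mA 0
    · exact mem_mA_of_mem_SA (gammaVal_mem_SA γ i)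

theorem eq_zero_of_mem_SA_of_mem_idealOfGamma {γ : Omega1A k q n →ₗ[k] SA k q n}
    {s : Aqn k q n} (hs : s ∈ SA k q n) (hsγ : s ∈ idealOfGamma k q n γ) : s = 0 := by
  have hfix : ∀ {s}, s ∈ SA k q n → retraction γ s = s :=
    apply_eq_self_of_mem_SA (by simp [retraction])
  have hker : idealOfGamma k q n γ ≤ RingHom.ker (retraction γ) :=
    idealOfGamma_le fun i hi => by
      rw [RingHom.mem_ker, map_sub, hfix (gammaVal_mem_SA γ i)]
      simp [retraction, hi]
  rw [← hfix hs]
  exact hker hsγ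

theorem idealOfGamma_injective : Function.Injective (idealOfGamma k q n) := by
  intro γ γ' h
  have hval : ∀ i, i ≠ 0 → gammaVal γ i = gammaVal γ' i := fun i hi => by
    have hmem : gammaVal γ' i - gammaVal γ i ∈ idealOfGamma k q n γ := by
      have := sub_mem (sub_gammaVal_mem_idealOfGamma γ hi) (h ▸ sub_gammaVal_mem_idealOfGamma γ' hi)
      rwa [sub_sub_sub_cancel_left] at this
    exact (sub_eq_zero.mp (eq_zero_of_mem_SA_of_mem_idealOfGamma
      (sub_mem (gammaVal_mem_SA γ' i) (gammaVal_mem_SA γ i)) hmem)).symm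
  refine LinearMap.ext_on Submodule.span_span_coe_preimage ?_
  rintro ⟨_, _⟩ ⟨i, hi, rfl⟩
  have := hval i hi
  rw [gammaVal, dif_neg hi, gammaVal, dif_neg hi] at this
  exact Subtype.ext this

def shearHom (t : Fin q → Aqn k q n) (ht : ∀ i, t i ∈ SA k q n) : Aqn k q n →ₐ[k] Aqn k q n :=
  lift (fun i => xA k q n i + t i) fun i => add_mem (xA_mem_mA i) (mem_mA_of_mem_SA (ht i))

@[simp]
theorem shearHom_xA (t : Fin q → Aqn k q n) (ht : ∀ i, t i ∈ SA k q n) (i : Fin q) :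
    shearHom t ht (xA k q n i) = xA k q n i + t i :=
  lift_xA _ _ i

theorem shearHom_comp_shearHom {t u : Fin q → Aqn k q n} (ht : ∀ i, t i ∈ SA k q n)
    (hu : ∀ i, u i ∈ SA k q n) (ht0 : t 0 = 0) :
    (shearHom t ht).comp (shearHom u hu) = shearHom (t + u) fun i => add_mem (ht i) (hu i) := by
  refine algHom_ext fun i => ?_
  have hfix := apply_eq_self_of_mem_SA (φ := shearHom t ht) (by simp [ht0]) (hu i)
  simp [hfix, add_assoc]

theorem shearHom_eq_id {t : Fin q → Aqn k q n} (ht : ∀ i, t i ∈ SA k q n) (h0 : t = 0) :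
    shearHom t ht = AlgHom.id k _ := by
  subst h0
  exact algHom_ext fun i => by simp

/-- `t 0 = 0` makes `shearHom t` fix `x_1`, hence `S`, which is what lets `shearHom (-t)` invert
it. -/
def shear (t : Fin q → Aqn k q n) (ht : ∀ i, t i ∈ SA k q n) (ht0 : t 0 = 0) :
    Aqn k q n ≃ₐ[k] Aqn k q n :=
  AlgEquiv.ofAlgHom (shearHom t ht) (shearHom (-t) fun i => neg_mem (ht i))
    ((shearHom_comp_shearHom _ _ ht0).trans (shearHom_eq_id _ (add_neg_cancel t)))
    ((shearHom_comp_shearHom _ _ (by simp [ht0])).trans (shearHom_eq_id _ (neg_add_cancel t)))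

@[simp]
theorem shear_xA (t : Fin q → Aqn k q n) (ht : ∀ i, t i ∈ SA k q n) (ht0 : t 0 = 0) (i : Fin q) :
    shear t ht ht0 (xA k q n i) = xA k q n i + t i :=
  shearHom_xA t ht i

theorem isLinearlyTrivial_shear (t : Fin q → Aqn k q n) (ht : ∀ i, t i ∈ SA k q n)
    (ht0 : t 0 = 0) : IsLinearlyTrivial (shear t ht ht0) := fun i => by
  rw [shear_xA, add_sub_cancel_left]
  exact mem_mA_sq_of_mem_SA (ht i)

def gammaShear (γ : Omega1A k q n →ₗ[k] SA k q n) : Aqn k q n ≃ₐ[k] Aqn k q n :=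
  shear (-gammaVal γ) (fun i => neg_mem (gammaVal_mem_SA γ i)) (by simp [gammaVal])

theorem map_gammaShear_q1A (γ : Omega1A k q n →ₗ[k] SA k q n) :
    (q1A k q n).map (gammaShear γ) = idealOfGamma k q n γ := by
  rw [q1A, Ideal.map_span, idealOfGamma_eq_span]
  congr 1
  ext y
  constructor
  · rintro ⟨_, ⟨i, hi, rfl⟩, rfl⟩
    exact ⟨i, hi, by simp [gammaShear, sub_eq_add_neg]⟩
  · rintro ⟨i, hi, rfl⟩
    exact ⟨xA k q n i, ⟨i, hi, rfl⟩, by simp [gammaShear, sub_eq_add_neg]⟩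

theorem mA_le_span_sup_map_sup_sq {σ : Aqn k q n ≃ₐ[k] Aqn k q n} (hσ : IsLinearlyTrivial σ) :
    mA k q n ≤ Ideal.span {xA k q n 0} ⊔ (q1A k q n).map σ ⊔ mA k q n ^ 2 := by
  have hq1 : q1A k q n ≤ (q1A k q n).map σ ⊔ mA k q n ^ 2 := by
    refine Ideal.span_le.mpr ?_
    rintro _ ⟨i, hi, rfl⟩
    rw [SetLike.mem_coe, ← sub_sub_cancel (σ (xA k q n i)) (xA k q n i)]
    exact sub_mem (Ideal.mem_sup_left (Ideal.mem_map_of_mem σ (Ideal.subset_span ⟨i, hi, rfl⟩)))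
      (Ideal.mem_sup_right (hσ i))
  refine mA_eq_span_sup_q1A.le.trans ?_
  rw [sup_assoc]
  exact sup_le_sup_left hq1 _

theorem mA_sq_le_SA_sup_map {σ : Aqn k q n ≃ₐ[k] Aqn k q n} (hσ : IsLinearlyTrivial σ) :
    (mA k q n ^ 2).restrictScalars k ≤ SA k q n ⊔ ((q1A k q n).map σ).restrictScalars k :=
  (Ideal.restrictScalars_pow_le_span_pow_sup exists_sub_algebraMap_mem_mA (xA_mem_mA 0)
    (mA_le_span_sup_map_sup_sq hσ) mA_pow_eq_bot 2).trans
    (sup_le_sup_right span_xA_zero_pow_le_SA _)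

theorem exists_SA_sub_mem_map {σ : Aqn k q n ≃ₐ[k] Aqn k q n} (hσ : IsLinearlyTrivial σ)
    {i : Fin q} (hi : i ≠ 0) : ∃ s ∈ SA k q n, xA k q n i - s ∈ (q1A k q n).map σ := by
  obtain ⟨s, hs, j, hj, hsj⟩ := Submodule.mem_sup.mp (mA_sq_le_SA_sup_map hσ (hσ i))
  refine ⟨-s, neg_mem hs, ?_⟩
  rw [show xA k q n i - -s = σ (xA k q n i) - j by linear_combination hsj]
  exact sub_mem (Ideal.mem_map_of_mem σ (Ideal.subset_span ⟨i, hi, rfl⟩)) hj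

theorem Omega1A_eq_span_range :
    Omega1A k q n = Submodule.span k (Set.range fun i : {i : Fin q // i ≠ 0} => xA k q n i) := by
  unfold Omega1A
  congr 1
  ext y
  constructor
  · rintro ⟨i, hi, rfl⟩
    exact ⟨⟨i, hi⟩, rfl⟩
  · rintro ⟨i, rfl⟩
    exact ⟨i.1, i.2, rfl⟩

def basisOmega1A (hn : 2 ≤ n) : Module.Basis {i : Fin q // i ≠ 0} k (Omega1A k q n) :=
  (Module.Basis.span ((linearIndependent_xA hn).comp _ Subtype.val_injective)).map
    (LinearEquiv.ofEq _ _ Omega1A_eq_span_range.symm)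

theorem basisOmega1A_apply (hn : 2 ≤ n) (i : {i : Fin q // i ≠ 0}) :
    basisOmega1A hn i = ⟨xA k q n i, Submodule.subset_span ⟨i.1, i.2, rfl⟩⟩ := by
  ext
  simp [basisOmega1A, Module.Basis.span_apply]

theorem exists_idealOfGamma_eq_map (hn : 2 ≤ n) {σ : Aqn k q n ≃ₐ[k] Aqn k q n}
    (hσ : IsLinearlyTrivial σ) : ∃ γ, idealOfGamma k q n γ = (q1A k q n).map σ := by
  choose s hs hsJ using fun i : {i : Fin q // i ≠ 0} => exists_SA_sub_mem_map hσ i.2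
  let γ := (basisOmega1A (k := k) (q := q) hn).constr k fun i => (⟨s i, hs i⟩ : SA k q n)
  have hγ : ∀ i (hi : i ≠ 0), gammaVal γ i = s ⟨i, hi⟩ := fun i hi => by
    rw [gammaVal, dif_neg hi, ← basisOmega1A_apply hn ⟨i, hi⟩, Module.Basis.constr_basis]
  have hle : idealOfGamma k q n γ ≤ (q1A k q n).map σ :=
    idealOfGamma_le fun i hi => hγ i hi ▸ hsJ ⟨i, hi⟩
  rw [← map_gammaShear_q1A] at hle
  exact ⟨γ, map_gammaShear_q1A γ ▸ Ideal.map_eq_map_of_map_le_map _ _ hle⟩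

end Aqn

theorem idealOfGamma_injective_range_orbit_general (k : Type) [Field k] (q n : ℕ) [NeZero q]
    (hn : 2 ≤ n) :
    Function.Injective (idealOfGamma k q n) ∧
    Set.range (idealOfGamma k q n) =
      {J : Ideal (Aqn k q n) | ∃ σ : Aqn k q n ≃ₐ[k] Aqn k q n,
        (∀ i, σ (xA k q n i) - xA k q n i ∈ (mA k q n) ^ 2) ∧
        J = Ideal.map σ (q1A k q n)} := by
  refine ⟨Aqn.idealOfGamma_injective, Set.ext fun J => ⟨?_, ?_⟩⟩
  · rintro ⟨γ, rfl⟩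
    exact ⟨Aqn.gammaShear γ, Aqn.isLinearlyTrivial_shear _ _ _, (Aqn.map_gammaShear_q1A γ).symm⟩
  · rintro ⟨σ, hσ, rfl⟩
    exact Aqn.exists_idealOfGamma_eq_map hn hσ

/-- `γ ↦ (x_2 - γ(x_2), …, x_q - γ(x_q))` is an injective map from
`Hom_k(Ω_1, S)` to ideals of `A_{q,n}`, whose image is exactly the orbit of the ideal
`q_1` under the group `I_{q,n}` of linearly trivial automorphisms. -/
theorem idealOfGamma_injective_range_orbit (k : Type) [Field k] (q n : ℕ) [NeZero q]
    (hq : 2 ≤ q) (hn : 2 ≤ n) :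
    Function.Injective (idealOfGamma k q n) ∧
    Set.range (idealOfGamma k q n) =
      {J : Ideal (Aqn k q n) | ∃ σ : Aqn k q n ≃ₐ[k] Aqn k q n,
        (∀ i, σ (xA k q n i) - xA k q n i ∈ (mA k q n) ^ 2) ∧
        J = Ideal.map σ (q1A k q n)} :=
  idealOfGamma_injective_range_orbit_general k q n hn
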